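/- Let K ≥ 2 and let η : {1,…,K} × {1,…,K} → (0,∞), writing η_{k→ℓ} := η(k,ℓ). Suppose that for every L ≥ 1 and all PAIRWISE DISTINCT indices j_1,…,j_L ∈ {1,…,K}, the cyclic product η_{j_1→j_2} ⋯ η_{j_L→j_1} ≥ 1. Then for every m ≥ 1 and all (not necessarily distinct) indices j_1,…,j_m ∈ {1,…,K}, the cyclic product η_{j_1→j_2} ⋯ η_{j_m→j_1} ≥ 1. -/

import Mathlib

/-!
Induction on the length of the cycle. If the indices of a cycle are not pairwise distinct, some
index repeats; rotating the cycle so that the repetition starts at position `0` cuts it, at the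
repeated index, into two strictly shorter cycles whose cyclic products multiply to the original
one. A product of two factors `≥ 1` is `≥ 1`.
-/

open Finset Fin.NatCast

section CyclicProd

variable {α M : Type*}

def cyclicProd [CommMonoid M] (η : α → α → M) {n : ℕ} (j : Fin (n + 1) → α) : M :=
  ∏ i, η (j i) (j (i + 1))

section CommMonoid

variable [CommMonoid M] (η : α → α → M)

theorem cyclicProd_comp_add_right {n : ℕ} (j : Fin (n + 1) → α) (a : Fin (n + 1)) :
    cyclicProd η (fun i => j (i + a)) = cyclicProd η j :=
  Fintype.prod_equiv (Equiv.addRight a) _ _ fun i => by simp [add_right_comm]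

theorem cyclicProd_natCast (g : ℕ → α) (n : ℕ) :
    cyclicProd η (fun i : Fin (n + 1) => g i) =
      (∏ i ∈ range n, η (g i) (g (i + 1))) * η (g n) (g 0) := by
  rw [cyclicProd, Fin.prod_univ_castSucc, ← Fin.prod_univ_eq_prod_range]
  congr 1
  · refine prod_congr rfl fun i _ => ?_
    rw [Fin.val_add_one_of_lt (Fin.castSucc_lt_last i), Fin.val_castSucc]
  · simp

theorem cyclicProd_natCast_eq_mul (g : ℕ → α) {t : ℕ} (s : ℕ) (hg : g (t + 1) = g 0) :
    cyclicProd η (fun i : Fin (t + 1 + s + 1) => g i) =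
      cyclicProd η (fun i : Fin (t + 1) => g i) *
        cyclicProd η (fun i : Fin (s + 1) => g (t + 1 + i)) := by
  rw [cyclicProd_natCast, cyclicProd_natCast, cyclicProd_natCast η (fun i => g (t + 1 + i)),
    prod_range_add, prod_range_succ _ t, ← hg, add_zero]
  simp only [mul_assoc, add_assoc]

theorem exists_cyclicProd_eq_mul_of_not_injective {m : ℕ} {j : Fin (m + 1) → α}
    (hj : ¬Function.Injective j) :
    ∃ (p q : ℕ) (j₁ : Fin (p + 1) → α) (j₂ : Fin (q + 1) → α), p < m ∧ q < m ∧
      cyclicProd η j = cyclicProd η j₁ * cyclicProd η j₂ := by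
  obtain ⟨a, b, hab, hne⟩ := Function.not_injective_iff.mp hj
  let g : ℕ → α := fun i => j (i + a)
  obtain ⟨t, ht⟩ : ∃ t, ((b - a : Fin (m + 1)) : ℕ) = t + 1 :=
    Nat.exists_eq_add_one.mpr (Fin.pos_iff_ne_zero.mpr (sub_ne_zero.mpr hne.symm))
  have hgt : g (t + 1) = g 0 := by simp [g, ← ht, hab]
  obtain ⟨s, rfl⟩ : ∃ s, m = t + 1 + s := Nat.exists_eq_add_of_le (by omega)
  refine ⟨t, s, fun i => g i, fun i => g (t + 1 + i), by omega, by omega, ?_⟩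
  rw [← cyclicProd_comp_add_right η j a, ← cyclicProd_natCast_eq_mul η g s hgt]
  simp [g]

end CommMonoid

theorem one_le_cyclicProd [CommMonoidWithZero M] [Preorder M] [ZeroLEOneClass M] [PosMulMono M]
    (η : α → α → M)
    (h : ∀ (L : ℕ) (j : Fin (L + 1) → α), Function.Injective j → 1 ≤ cyclicProd η j)
    (m : ℕ) (j : Fin (m + 1) → α) : 1 ≤ cyclicProd η j := by
  induction m using Nat.strong_induction_on with
  | _ m ih =>
    by_cases hj : Function.Injective j
    · exact h m j hj
    obtain ⟨p, q, j₁, j₂, hp, hq, hsplit⟩ := exists_cyclicProd_eq_mul_of_not_injective η hj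
    rw [hsplit]
    exact one_le_mul_of_one_le_of_one_le (ih p hp j₁) (ih q hq j₂)

end CyclicProd

theorem stmt7 (K : ℕ) (η : Fin K → Fin K → ℝ)
    (hdistinct : ∀ (L : ℕ) (j : Fin (L + 1) → Fin K), Function.Injective j →
      1 ≤ ∏ i : Fin (L + 1), η (j i) (j (i + 1))) :
    ∀ (m : ℕ) (j : Fin (m + 1) → Fin K),
      1 ≤ ∏ i : Fin (m + 1), η (j i) (j (i + 1)) :=
  one_le_cyclicProd η hdistinct
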